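/- Let T be a directed tree, let λ = {λ_v}_{v∈V°} be complex numbers, {ε_u}_{u∈V} nonnegative reals and {μ_u}_{u∈V} Borel probability measures on ℝ₊ satisfying the consistency equation at every u ∈ V, and let S_λ be the weighted shift on T with weights λ. Then: (i) ∫_0^∞ sⁿ dμ_u(s) = Σ_{v∈Chi^⟨n⟩(u)} |λ_{u|v}|² for all u ∈ V and integers n ≥ 1; (ii) if Chi^⟨n⟩(u) = ∅ for some u ∈ V and n ≥ 1, then μ_v = δ₀ for all v ∈ Des(u); (iii) E ⊆ D∞(S_λ) if and only if ∫_0^∞ sⁿ dμ_u(s) < ∞ for all n ∈ ℕ and u ∈ V; (iv) if E ⊆ D∞(S_λ), then ‖S_λⁿ e_u‖² = ∫_0^∞ sⁿ dμ_u(s) for all u ∈ V and n ∈ ℕ; (v) S_λ is a bounded operator with domain all of ℓ²(V) if and only if there exists M ≥ 0 such that supp μ_u ⊆ [0, M] for every u ∈ V. -/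

import Mathlib

open Filter
open scoped ENNReal InnerProductSpace ComplexConjugate

attribute [local instance] Classical.propDecidable

noncomputable section

namespace Paper

universe u

/-- A directed tree: a directed graph which is connected (as an undirected graph), has no
(directed) circuits, and in which every vertex has at most one parent. -/
structure DirectedTree (V : Type*) where
  E : V → V → Prop
  connected : ∀ u v : V, Relation.ReflTransGen (fun a b => E a b ∨ E b a) u v
  noCircuits : ∀ v : V, ¬ Relation.TransGen E v v
  par_unique : ∀ ⦃u₁ u₂ v : V⦄, E u₁ v → E u₂ v → u₁ = u₂

namespace DirectedTree

variable {V : Type*} (t : DirectedTree V)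

/-- The set of children of a vertex. -/
def chi (u : V) : Set V := {v | t.E u v}

/-- `v` has a parent, i.e. `v ∈ V°`. -/
def hasPar (v : V) : Prop := ∃ u, t.E u v

/-- The parent partial function, as a total function with junk value `v` at parentless
vertices. -/
noncomputable def par (v : V) : V := if h : t.hasPar v then h.choose else v

/-- Children of a set of vertices. -/
def chiSet (W : Set V) : Set V := {v | ∃ u ∈ W, t.E u v}

/-- `n`-fold children of a set of vertices. -/
def chiIter : ℕ → Set V → Set V
  | 0, W => W
  | n + 1, W => t.chiSet (chiIter n W)

/-- `Chi^⟨n⟩(u)`. -/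
def chin (n : ℕ) (u : V) : Set V := t.chiIter n {u}

/-- The descendants of a vertex. -/
def des (u : V) : Set V := ⋃ n : ℕ, t.chin n u

/-- `λ_{u∣v} = ∏_{j=0}^{n-1} λ_{par^j(v)}` for `v ∈ Chi^⟨n⟩(u)`. -/
noncomputable def wprod (lam : V → ℂ) (n : ℕ) (v : V) : ℂ :=
  ∏ j ∈ Finset.range n, lam (t.par^[j] v)

end DirectedTree

/-- The Hilbert space `ℓ²(V)`. -/
abbrev H2 (V : Type*) := lp (fun _ : V => ℂ) 2

/-- The basis vector `e_u ∈ ℓ²(V)`. -/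
noncomputable def evec {V : Type*} (u : V) : H2 V :=
  haveI := Classical.decEq V
  lp.single 2 u 1

/-- The linear subspace `E = lin{e_u : u ∈ V}`. -/
noncomputable def espan (V : Type*) : Submodule ℂ (H2 V) :=
  Submodule.span ℂ (Set.range (evec : V → H2 V))

/-- The map `Λ_T` on all functions `V → ℂ`:
`(Λ_T f)(v) = λ_v f(par(v))` for `v ∈ V°` and `0` at the root. -/
noncomputable def lamLin {V : Type*} (t : DirectedTree V) (lam : V → ℂ) :
    (V → ℂ) →ₗ[ℂ] (V → ℂ) where
  toFun f := fun v => if t.hasPar v then lam v * f (t.par v) else 0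
  map_add' f g := by
    funext v
    by_cases h : t.hasPar v <;> simp [h, mul_add]
  map_smul' c f := by
    funext v
    by_cases h : t.hasPar v <;> simp [h] <;> ring

/-- The domain `{f ∈ ℓ²(V) : Λ_T f ∈ ℓ²(V)}` of the weighted shift. -/
noncomputable def shiftDom {V : Type*} (t : DirectedTree V) (lam : V → ℂ) :
    Submodule ℂ (H2 V) where
  carrier := {f | Memℓp (lamLin t lam f) 2}
  zero_mem' := by
    simpa only [Set.mem_setOf_eq, lp.coeFn_zero, map_zero] using zero_memℓp
  add_mem' := by
    intro f g hf hg
    simp only [Set.mem_setOf_eq, lp.coeFn_add, map_add] at *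
    exact hf.add hg
  smul_mem' := by
    intro c f hf
    simp only [Set.mem_setOf_eq] at hf ⊢
    rw [lp.coeFn_smul, LinearMap.map_smul]
    exact hf.const_smul c

/-- The weighted shift `S_λ` on the directed tree `T`, as an unbounded operator in `ℓ²(V)`. -/
noncomputable def shift {V : Type*} (t : DirectedTree V) (lam : V → ℂ) :
    H2 V →ₗ.[ℂ] H2 V where
  domain := shiftDom t lam
  toFun :=
    { toFun := fun f => (⟨lamLin t lam f, f.2⟩ : H2 V)
      map_add' := by
        intro f g
        apply lp.ext
        simp only [Submodule.coe_add, lp.coeFn_add, map_add]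
      map_smul' := by
        intro c f
        apply lp.ext
        simp only [SetLike.val_smul, lp.coeFn_smul, LinearMap.map_smul, RingHom.id_apply] }

section Operator

variable {H : Type*} [NormedAddCommGroup H] [InnerProductSpace ℂ H]

/-- `x ∈ D(Tⁿ)`. -/
def iterMem (T : H →ₗ.[ℂ] H) : ℕ → H → Prop
  | 0, _ => True
  | n + 1, x => ∃ h : x ∈ T.domain, iterMem T n (T ⟨x, h⟩)

/-- `Tⁿ x` (junk value `0` if undefined along the way). -/
noncomputable def iterApp (T : H →ₗ.[ℂ] H) : ℕ → H → H
  | 0, x => x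
  | n + 1, x => if h : x ∈ T.domain then iterApp T n (T ⟨x, h⟩) else 0

/-- The inner product in the paper's convention: `⟨x, y⟩` is linear in `x`. -/
noncomputable def pinner (x y : H) : ℂ := inner (𝕜 := ℂ) y x

/-- `E ⊆ D∞(S_λ)` where `E = lin{e_u : u ∈ V}`. -/
def spanDomInfty {V : Type*} (t : DirectedTree V) (lam : V → ℂ) : Prop :=
  ∀ f ∈ espan V, ∀ n : ℕ, iterMem (shift t lam) n f

/-- A linear subspace `F` is a core of `T` if the graph of `T` is contained in the closure of
the graph of `T|_F`. -/
def IsCore (T : H →ₗ.[ℂ] H) (F : Submodule ℂ H) : Prop :=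
  (T.graph : Set (H × H)) ⊆ closure ((T.domRestrict F).graph : Set (H × H))

/-- `f` is a quasi-analytic vector of `T`:
`f ∈ D∞(T)` and `∑_{n ≥ 1} ‖Tⁿ f‖^{-1/n} = ∞` (convention `1/0 = ∞`). -/
def QuasiAnalyticVec (T : H →ₗ.[ℂ] H) (f : H) : Prop :=
  (∀ n : ℕ, iterMem T n f) ∧
    ∑' n : ℕ, (ENNReal.ofReal (‖iterApp T (n + 1) f‖ ^ (1 / (n + 1 : ℝ))))⁻¹ = ∞

end Operator

section NormalSubnormal

/-- A normal operator: closed, densely defined, with `D(N) = D(N*)` and `‖N* h‖ = ‖N h‖` on the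
common domain. -/
structure IsNormalOp {K : Type*} [NormedAddCommGroup K] [InnerProductSpace ℂ K]
    [CompleteSpace K] (N : K →ₗ.[ℂ] K) : Prop where
  dense : Dense (N.domain : Set K)
  isClosed : N.IsClosed
  dom_adjoint : N.adjoint.domain = N.domain
  norm_adjoint : ∀ (x : K) (hx : x ∈ N.domain) (hx' : x ∈ N.adjoint.domain),
    ‖N.adjoint ⟨x, hx'⟩‖ = ‖N ⟨x, hx⟩‖

/-- A normal extension of `S`: a Hilbert space `K`, an isometric linear embedding `J : H → K`,
and a normal operator `N` in `K` with `N (J h) = J (S h)` for all `h ∈ D(S)`. -/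
structure NormalExtension {H : Type u} [NormedAddCommGroup H] [InnerProductSpace ℂ H]
    (S : H →ₗ.[ℂ] H) : Type (u + 1) where
  K : Type u
  [instNG : NormedAddCommGroup K]
  [instIP : InnerProductSpace ℂ K]
  [instCS : CompleteSpace K]
  J : H →ₗᵢ[ℂ] K
  N : K →ₗ.[ℂ] K
  normal : IsNormalOp N
  ext_prop : ∀ x : S.domain, ∃ hx : J x ∈ N.domain, N ⟨J x, hx⟩ = J (S x)

/-- A densely defined operator is subnormal if it has a normal extension. -/
def Subnormal {H : Type u} [NormedAddCommGroup H] [InnerProductSpace ℂ H]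
    (S : H →ₗ.[ℂ] H) : Prop :=
  Dense (S.domain : Set H) ∧ Nonempty (NormalExtension S)

/-- A hyponormal operator: densely defined, `D(S) ⊆ D(S*)` and `‖S* f‖ ≤ ‖S f‖` on `D(S)`. -/
def Hyponormal {H : Type*} [NormedAddCommGroup H] [InnerProductSpace ℂ H] [CompleteSpace H]
    (S : H →ₗ.[ℂ] H) : Prop :=
  Dense (S.domain : Set H) ∧ S.domain ≤ S.adjoint.domain ∧
    ∀ (x : H) (hx : x ∈ S.domain) (hx' : x ∈ S.adjoint.domain),
      ‖S.adjoint ⟨x, hx'⟩‖ ≤ ‖S ⟨x, hx⟩‖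

end NormalSubnormal

section Stieltjes

open MeasureTheory

/-- `μ` is a representing measure of `{t_n}`: a positive Borel measure on `ℝ₊`
with `t_n = ∫_0^∞ sⁿ dμ(s)` for all `n`. -/
def IsRepMeasure (μ : Measure ℝ) (t : ℕ → ℝ) : Prop :=
  μ (Set.Iio 0) = 0 ∧ ∀ n : ℕ, Integrable (fun s => s ^ n) μ ∧ t n = ∫ s, s ^ n ∂μ

/-- `{t_n}` is a Stieltjes moment sequence. -/
def IsStieltjes (t : ℕ → ℝ) : Prop := ∃ μ : Measure ℝ, IsRepMeasure μ t

/-- A Stieltjes moment sequence is determinate if it has only one representing measure. -/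
def Determinate (t : ℕ → ℝ) : Prop :=
  ∀ ⦃μ ν : Measure ℝ⦄, IsRepMeasure μ t → IsRepMeasure ν t → μ = ν

/-- `∫_σ (1/s) dμ(s)`, with the convention `1/0 = ∞`. -/
noncomputable def recipInt (μ : Measure ℝ) (σ : Set ℝ) : ℝ≥0∞ :=
  ∫⁻ s in σ, (ENNReal.ofReal s)⁻¹ ∂μ

/-- The sequence `(θ, t_0, t_1, …)`. -/
def prepend (θ : ℝ) (t : ℕ → ℝ) : ℕ → ℝ
  | 0 => θ
  | n + 1 => t n

/-- `{t_n}` is positive definite. -/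
def PosDefSeq (t : ℕ → ℝ) : Prop :=
  ∀ (n : ℕ) (α : ℕ → ℂ),
    0 ≤ (∑ k ∈ Finset.range (n + 1), ∑ l ∈ Finset.range (n + 1),
      (t (k + l) : ℂ) * α k * (starRingEnd ℂ) (α l)).re

/-- The measure `ν_μ(σ) = ∫_σ (1/s) dμ(s) + (θ − ∫_0^∞ (1/s) dμ(s)) δ₀(σ)`. -/
noncomputable def numap (θ : ℝ) (μ : Measure ℝ) : Measure ℝ :=
  μ.withDensity (fun s => (ENNReal.ofReal s)⁻¹) +
    (ENNReal.ofReal θ - recipInt μ Set.univ) • Measure.dirac (0 : ℝ)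

/-- The measure `μ_ν(σ) = ∫_σ s dν(s)`. -/
noncomputable def mumap (ν : Measure ℝ) : Measure ℝ :=
  ν.withDensity fun s => ENNReal.ofReal s

end Stieltjes

section Consistency

open MeasureTheory

variable {V : Type*}

/-- The consistency condition \eqref{muu+} at the vertex `u`:
`μ_u(σ) = Σ_{v ∈ Chi(u)} |λ_v|² ∫_σ (1/s) dμ_v(s) + ε_u δ₀(σ)`. -/
def Consistent (t : DirectedTree V) (lam : V → ℂ) (μ : V → Measure ℝ) (ε : V → ℝ)
    (u : V) : Prop :=
  ∀ σ : Set ℝ, MeasurableSet σ →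
    μ u σ = (∑' v : t.chi u, ENNReal.ofReal (‖lam (v : V)‖ ^ 2) * recipInt (μ (v : V)) σ)
      + ENNReal.ofReal (ε u) * Measure.dirac (0 : ℝ) σ

/-- The measure `μ_u` from Lemma charsub2, built from the children measures:
`μ_u(σ) = Σ_{v ∈ Chi(u)} |λ_v|² ∫_σ (1/s) dμ_v(s) + ε_u δ₀(σ)` with
`ε_u = 1 − Σ_{v ∈ Chi(u)} |λ_v|² ∫_0^∞ (1/s) dμ_v(s)`. -/
noncomputable def consMeasure (t : DirectedTree V) (lam : V → ℂ) (μ : V → Measure ℝ)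
    (u : V) : Measure ℝ :=
  Measure.sum (fun v : t.chi u =>
      ENNReal.ofReal (‖lam (v : V)‖ ^ 2) •
        (μ (v : V)).withDensity fun s => (ENNReal.ofReal s)⁻¹) +
    (1 - ∑' v : t.chi u, ENNReal.ofReal (‖lam (v : V)‖ ^ 2) * recipInt (μ (v : V)) Set.univ) •
      Measure.dirac (0 : ℝ)

end Consistency

end Paper

open Paper MeasureTheory Filter
open scoped ENNReal

/-!
Unfolding the consistency equation once gives
`∫ sⁿ⁺¹ dμ_u = ∑_{v ∈ Chi(u)} |λ_v|² ∫ sⁿ dμ_v`. An atom of `μ_v` at `0` does no harm: where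
`λ_v ≠ 0` it would make `∫_{0} 1/s dμ_v`, hence `μ_u {0}`, infinite. The sums
`∑_{w ∈ Chi⟨n⟩(u)} |λ_{u|w}|²` obey the same recursion, since `Chi⟨n+1⟩(u)` is the disjoint
union of the `Chi⟨n⟩(v)`, `v ∈ Chi(u)`. This is (i), and an empty `Chi⟨n⟩` forces a vanishing
`n`-th moment, so the measure is `δ₀`. As `S_λⁿ e_u = ∑_{w ∈ Chi⟨n⟩(u)} λ_{u|w} e_w`, the same
sums are `‖S_λⁿ e_u‖²`, which gives (iii) and (iv). For (v), grouping the vertices by their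
parent gives `‖S_λ f‖² = ∑_u (∑_{v ∈ Chi(u)} |λ_v|²) |f u|²`, whose inner sum is the first
moment of `μ_u`; conversely `‖S_λ‖ ≤ C` bounds the moments by `C²ⁿ`, which confines `μ_u` to
`[0, C²]`.
-/

namespace Paper.DirectedTree

variable {V : Type*} (t : DirectedTree V)

lemma par_eq_of_E {u v : V} (h : t.E u v) : t.par v = u := by
  have hv : t.hasPar v := ⟨u, h⟩
  rw [par, dif_pos hv]
  exact t.par_unique hv.choose_spec h

lemma E_par {v : V} (h : t.hasPar v) : t.E (t.par v) v := by
  rw [par, dif_pos h]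
  exact h.choose_spec

lemma iUnion_chi : ⋃ u, t.chi u = {v | t.hasPar v} := by
  ext v
  simp [chi, hasPar]

lemma pairwiseDisjoint_chi : (Set.univ : Set V).PairwiseDisjoint t.chi :=
  fun _ _ _ _ hne => Set.disjoint_left.2 fun _ h₁ h₂ => hne (t.par_unique h₁ h₂)

lemma mem_chin_succ {n : ℕ} {u w : V} : w ∈ t.chin (n + 1) u ↔ ∃ x ∈ t.chin n u, t.E x w :=
  Iff.rfl

lemma mem_chin_succ_iff_par {n : ℕ} {u v : V} (hv : t.hasPar v) :
    v ∈ t.chin (n + 1) u ↔ t.par v ∈ t.chin n u :=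
  ⟨fun ⟨_, hx, hxv⟩ => t.par_eq_of_E hxv ▸ hx, fun h => ⟨t.par v, h, t.E_par hv⟩⟩

lemma hasPar_of_mem_chin_succ {n : ℕ} {u v : V} (h : v ∈ t.chin (n + 1) u) : t.hasPar v :=
  let ⟨x, _, hxv⟩ := h
  ⟨x, hxv⟩

lemma chin_one (u : V) : t.chin 1 u = t.chi u := by
  ext v
  simp [chin, chiIter, chiSet, chi]

lemma mem_chin_succ' {n : ℕ} {u w : V} :
    w ∈ t.chin (n + 1) u ↔ ∃ v ∈ t.chi u, w ∈ t.chin n v := by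
  induction n generalizing w with
  | zero =>
    rw [chin_one]
    simp [chin, chiIter]
  | succ n ih =>
    simp only [t.mem_chin_succ (n := n + 1), ih]
    constructor
    · rintro ⟨x, ⟨v, hv, hx⟩, hxw⟩
      exact ⟨v, hv, x, hx, hxw⟩
    · rintro ⟨v, hv, x, hx, hxw⟩
      exact ⟨x, ⟨v, hv, hx⟩, hxw⟩

lemma chin_succ_eq_biUnion (n : ℕ) (u : V) :
    t.chin (n + 1) u = ⋃ v ∈ t.chi u, t.chin n v := by
  ext w
  simp [mem_chin_succ']

lemma par_iterate_of_mem_chin {n : ℕ} {u w : V} (h : w ∈ t.chin n u) : t.par^[n] w = u := by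
  induction n generalizing w with
  | zero => exact h
  | succ n ih =>
    obtain ⟨x, hx, hxw⟩ := t.mem_chin_succ.1 h
    rw [Function.iterate_succ_apply, t.par_eq_of_E hxw, ih hx]

lemma pairwiseDisjoint_chin (n : ℕ) (S : Set V) : S.PairwiseDisjoint (t.chin n) :=
  fun _ _ _ _ hne => Set.disjoint_left.2 fun _ h₁ h₂ =>
    hne ((t.par_iterate_of_mem_chin h₁).symm.trans (t.par_iterate_of_mem_chin h₂))

lemma par_iterate_mem_chin {n k : ℕ} {u w : V} (h : w ∈ t.chin (n + k) u) :
    t.par^[k] w ∈ t.chin n u := by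
  induction k generalizing w with
  | zero => exact h
  | succ k ih =>
    obtain ⟨x, hx, hxw⟩ := t.mem_chin_succ.1 h
    rw [Function.iterate_succ_apply, t.par_eq_of_E hxw]
    exact ih hx

lemma mem_chin_add {k n : ℕ} {u v w : V} (hv : v ∈ t.chin k u) (hw : w ∈ t.chin n v) :
    w ∈ t.chin (k + n) u := by
  induction n generalizing w with
  | zero => rwa [show w = v from hw]
  | succ n ih =>
    obtain ⟨x, hx, hxw⟩ := t.mem_chin_succ.1 hw
    exact ⟨x, ih hx, hxw⟩

lemma chin_eq_empty_of_mem_des {n : ℕ} {u v : V} (hu : t.chin n u = ∅) (hv : v ∈ t.des u) :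
    t.chin n v = ∅ := by
  obtain ⟨k, hk⟩ := Set.mem_iUnion.1 hv
  refine Set.eq_empty_of_forall_notMem fun w hw => ?_
  have := t.par_iterate_mem_chin (k := k) (add_comm k n ▸ t.mem_chin_add hk hw)
  rw [hu] at this
  exact this

variable (lam : V → ℂ)

lemma wprod_succ (n : ℕ) (v : V) :
    t.wprod lam (n + 1) v = lam v * t.wprod lam n (t.par v) := by
  simp only [wprod, Finset.prod_range_succ', Function.iterate_succ_apply, Function.iterate_zero,
    id, mul_comm]

lemma wprod_succ_of_mem_chin {n : ℕ} {u w : V} (h : w ∈ t.chin n u) :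
    t.wprod lam (n + 1) w = t.wprod lam n w * lam u := by
  rw [wprod, Finset.prod_range_succ, t.par_iterate_of_mem_chin h]
  rfl

def weightSum (n : ℕ) (u : V) : ℝ≥0∞ :=
  ∑' v : t.chin n u, ENNReal.ofReal (‖t.wprod lam n v‖ ^ 2)

lemma weightSum_zero (u : V) : t.weightSum lam 0 u = 1 := by
  have : t.chin 0 u = {u} := rfl
  simp [weightSum, this, wprod]

lemma weightSum_succ (n : ℕ) (u : V) :
    t.weightSum lam (n + 1) u =
      ∑' v : t.chi u, ENNReal.ofReal (‖lam v‖ ^ 2) * t.weightSum lam n v := by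
  rw [weightSum, chin_succ_eq_biUnion, ENNReal.tsum_biUnion'
    (f := fun w => ENNReal.ofReal (‖t.wprod lam (n + 1) w‖ ^ 2)) (t.pairwiseDisjoint_chin n _)]
  refine tsum_congr fun v => ?_
  rw [weightSum, ← ENNReal.tsum_mul_left]
  refine tsum_congr fun w => ?_
  rw [t.wprod_succ_of_mem_chin lam w.2, norm_mul, mul_pow, ENNReal.ofReal_mul (by positivity),
    mul_comm]

end Paper.DirectedTree

lemma ofReal_norm_sq_eq_enorm_sq {E : Type*} [SeminormedAddGroup E] (x : E) :
    ENNReal.ofReal (‖x‖ ^ 2) = ‖x‖ₑ ^ 2 := by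
  rw [ENNReal.ofReal_pow (norm_nonneg x), ofReal_norm]

section MomentsOnHalfLine

variable {ν : Measure ℝ}

lemma ae_nonneg_of_measure_Iio_eq_zero (h : ν (Set.Iio 0) = 0) : ∀ᵐ s ∂ν, 0 ≤ s :=
  (measure_eq_zero_iff_ae_notMem.1 h).mono fun _ hs => not_lt.1 hs

lemma lintegral_inv_mul_pow_succ (h : ν (Set.Iic 0) = 0) (n : ℕ) :
    ∫⁻ s, (ENNReal.ofReal s)⁻¹ * ENNReal.ofReal s ^ (n + 1) ∂ν =
      ∫⁻ s, ENNReal.ofReal s ^ n ∂ν := by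
  have hpos : ∀ᵐ s ∂ν, 0 < s :=
    (measure_eq_zero_iff_ae_notMem.1 h).mono fun _ hs => not_le.1 hs
  refine lintegral_congr_ae ?_
  filter_upwards [hpos] with s hs
  rw [pow_succ', ← mul_assoc, ENNReal.inv_mul_cancel (by simpa using hs) ENNReal.ofReal_ne_top,
    one_mul]

lemma eq_dirac_zero_of_lintegral_pow_eq_zero [IsProbabilityMeasure ν]
    (hneg : ν (Set.Iio 0) = 0) {n : ℕ} (hn : n ≠ 0) (h : ∫⁻ s, ENNReal.ofReal s ^ n ∂ν = 0) :
    ν = Measure.dirac 0 := by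
  have hle : ∀ᵐ s ∂ν, s ≤ 0 := by
    filter_upwards [(lintegral_eq_zero_iff (by fun_prop)).1 h] with s hs
    simpa [hn] using hs
  have hzero : ∀ᵐ s ∂ν, s ∈ ({0} : Finset ℝ) := by
    filter_upwards [hle, ae_nonneg_of_measure_Iio_eq_zero hneg] with s h₁ h₂
    simpa using le_antisymm h₁ h₂
  have hone : ν {0} = 1 := by
    rw [← prob_compl_eq_zero_iff (measurableSet_singleton 0), measure_eq_zero_iff_ae_notMem]
    simpa using hzero
  rw [Measure.ae_mem_finset_iff.1 hzero, Finset.sum_singleton, hone, one_smul]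

lemma lintegral_pow_le_of_measure_compl_Icc_eq_zero {M : ℝ} (h : ν (Set.Icc 0 M)ᶜ = 0)
    (n : ℕ) : ∫⁻ s, ENNReal.ofReal s ^ n ∂ν ≤ ENNReal.ofReal M ^ n * ν Set.univ :=
  calc ∫⁻ s, ENNReal.ofReal s ^ n ∂ν ≤ ∫⁻ _, ENNReal.ofReal M ^ n ∂ν :=
        lintegral_mono_ae <| (measure_eq_zero_iff_ae_notMem.1 h).mono fun _ hs =>
          pow_le_pow_left' (ENNReal.ofReal_le_ofReal (not_not.1 hs).2) n
    _ = ENNReal.ofReal M ^ n * ν Set.univ := lintegral_const _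

lemma measure_Ici_eq_zero_of_lintegral_pow_le {M M' : ℝ} (hM : 0 ≤ M) (hMM' : M < M')
    (hmom : ∀ n : ℕ, ∫⁻ s, ENNReal.ofReal s ^ n ∂ν ≤ ENNReal.ofReal M ^ n) :
    ν (Set.Ici M') = 0 := by
  have hM' : 0 < M' := hM.trans_lt hMM'
  have hbound (n : ℕ) : ν (Set.Ici M') ≤ ENNReal.ofReal (M / M') ^ n := by
    refine (ENNReal.mul_le_mul_iff_right (pow_ne_zero n (by simpa using hM'))
      (ENNReal.pow_ne_top ENNReal.ofReal_ne_top)).1 ?_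
    calc ENNReal.ofReal M' ^ n * ν (Set.Ici M')
        ≤ ENNReal.ofReal M' ^ n * ν {s | ENNReal.ofReal M' ^ n ≤ ENNReal.ofReal s ^ n} := by
          gcongr
          intro s hs
          exact pow_le_pow_left' (ENNReal.ofReal_le_ofReal hs) n
      _ ≤ ∫⁻ s, ENNReal.ofReal s ^ n ∂ν := mul_meas_ge_le_lintegral (by fun_prop) _
      _ ≤ ENNReal.ofReal M ^ n := hmom n
      _ = ENNReal.ofReal M' ^ n * ENNReal.ofReal (M / M') ^ n := by
          rw [← mul_pow, ← ENNReal.ofReal_mul hM'.le, mul_div_cancel₀ _ hM'.ne']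
  have hlt : ENNReal.ofReal (M / M') < 1 := ENNReal.ofReal_lt_one.2 ((div_lt_one hM').2 hMM')
  exact le_antisymm (ge_of_tendsto' (ENNReal.tendsto_pow_atTop_nhds_zero_iff.2 hlt) hbound)
    bot_le

lemma measure_compl_Icc_eq_zero_of_lintegral_pow_le {M : ℝ} (hneg : ν (Set.Iio 0) = 0)
    (hM : 0 ≤ M) (hmom : ∀ n : ℕ, ∫⁻ s, ENNReal.ofReal s ^ n ∂ν ≤ ENNReal.ofReal M ^ n) :
    ν (Set.Icc 0 M)ᶜ = 0 := by
  have hlim : Tendsto (fun k : ℕ => M + 1 / ((k : ℝ) + 1)) atTop (nhds M) := by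
    simpa using tendsto_one_div_add_atTop_nhds_zero_nat.const_add M
  have hlt : ∀ᵐ s ∂ν, ∀ k : ℕ, s < M + 1 / ((k : ℝ) + 1) :=
    ae_all_iff.2 fun k => (measure_eq_zero_iff_ae_notMem.1
      (measure_Ici_eq_zero_of_lintegral_pow_le hM (lt_add_of_pos_right M (by positivity))
        hmom)).mono fun _ hs => not_le.1 hs
  rw [measure_eq_zero_iff_ae_notMem]
  filter_upwards [ae_nonneg_of_measure_Iio_eq_zero hneg, hlt] with s h₀ hs
  exact not_not.2 ⟨h₀, ge_of_tendsto' hlim fun k => (hs k).le⟩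

end MomentsOnHalfLine

namespace Paper.Consistent

variable {V : Type*} {t : DirectedTree V} {lam : V → ℂ} {μ : V → Measure ℝ} {ε : V → ℝ}
  {u : V}

lemma eq_sum_withDensity (hc : Consistent t lam μ ε u) :
    μ u = Measure.sum (fun v : t.chi u => ENNReal.ofReal (‖lam v‖ ^ 2) •
        (μ v).withDensity fun s => (ENNReal.ofReal s)⁻¹) +
      ENNReal.ofReal (ε u) • Measure.dirac 0 := by
  ext σ hσ
  rw [Measure.add_apply, Measure.sum_apply _ hσ, Measure.smul_apply, smul_eq_mul, hc σ hσ]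
  congr 1
  refine tsum_congr fun v => ?_
  rw [Measure.smul_apply, smul_eq_mul, withDensity_apply _ hσ, recipInt]

lemma lintegral_eq (hc : Consistent t lam μ ε u) {g : ℝ → ℝ≥0∞} (hg : Measurable g) :
    ∫⁻ s, g s ∂μ u = (∑' v : t.chi u, ENNReal.ofReal (‖lam v‖ ^ 2) *
        ∫⁻ s, (ENNReal.ofReal s)⁻¹ * g s ∂μ v) + ENNReal.ofReal (ε u) * g 0 := by
  rw [hc.eq_sum_withDensity, lintegral_add_measure, lintegral_sum_measure,
    lintegral_smul_measure, lintegral_dirac' _ hg]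
  congr 1
  refine tsum_congr fun v => ?_
  rw [lintegral_smul_measure, lintegral_withDensity_eq_lintegral_mul _ (by fun_prop) hg]
  rfl

lemma measure_singleton_zero_eq_zero (hc : Consistent t lam μ ε u) [IsFiniteMeasure (μ u)]
    {v : V} (hv : v ∈ t.chi u) (hlam : lam v ≠ 0) : μ v {0} = 0 := by
  by_contra h
  have hrecip : recipInt (μ v) {0} = ∞ := by simp [recipInt, h]
  have : ∞ ≤ μ u {0} :=
    calc ∞ = ENNReal.ofReal (‖lam v‖ ^ 2) * recipInt (μ v) {0} := by
          rw [hrecip, ENNReal.mul_top (by simpa using hlam)]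
      _ ≤ ∑' w : t.chi u, ENNReal.ofReal (‖lam w‖ ^ 2) * recipInt (μ w) {0} :=
          ENNReal.le_tsum (⟨v, hv⟩ : t.chi u)
      _ ≤ _ := le_self_add
      _ = μ u {0} := (hc {0} (measurableSet_singleton 0)).symm
  exact measure_ne_top _ _ (top_le_iff.1 this)

lemma lintegral_pow_succ (hc : Consistent t lam μ ε u) [IsFiniteMeasure (μ u)]
    (hneg : ∀ v, μ v (Set.Iio 0) = 0) (n : ℕ) :
    ∫⁻ s, ENNReal.ofReal s ^ (n + 1) ∂μ u =
      ∑' v : t.chi u, ENNReal.ofReal (‖lam v‖ ^ 2) * ∫⁻ s, ENNReal.ofReal s ^ n ∂μ v := by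
  rw [hc.lintegral_eq (by fun_prop), ENNReal.ofReal_zero, zero_pow n.succ_ne_zero, mul_zero,
    add_zero]
  refine tsum_congr fun v => ?_
  rcases eq_or_ne (lam v) 0 with hlam | hlam
  · simp [hlam]
  · rw [lintegral_inv_mul_pow_succ]
    rw [← Set.Iio_union_right]
    exact measure_union_null (hneg v) (hc.measure_singleton_zero_eq_zero v.2 hlam)

end Paper.Consistent

lemma Paper.lintegral_pow_eq_weightSum {V : Type*} {t : DirectedTree V} {lam : V → ℂ}
    {μ : V → Measure ℝ} {ε : V → ℝ} (hprob : ∀ u, IsProbabilityMeasure (μ u))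
    (hneg : ∀ u, μ u (Set.Iio 0) = 0) (hcons : ∀ u, Consistent t lam μ ε u) (n : ℕ) (u : V) :
    ∫⁻ s, ENNReal.ofReal s ^ n ∂μ u = t.weightSum lam n u := by
  induction n generalizing u with
  | zero => simp [DirectedTree.weightSum_zero, (hprob u).measure_univ]
  | succ n ih =>
    have := hprob u
    simp only [(hcons u).lintegral_pow_succ hneg, DirectedTree.weightSum_succ, ih]

section lp

variable {ι : Type*} {E : ι → Type*} [∀ i, NormedAddCommGroup (E i)]

lemma memℓp_two_iff_tsum_enorm_sq_ne_top {f : ∀ i, E i} :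
    Memℓp f 2 ↔ ∑' i, ‖f i‖ₑ ^ 2 ≠ ∞ := by
  have hcoe (i : ι) : ‖f i‖ₑ ^ 2 = ((‖f i‖₊ ^ 2 : NNReal) : ℝ≥0∞) := by simp [enorm_eq_nnnorm]
  simp_rw [hcoe, ENNReal.tsum_coe_ne_top_iff_summable, ← NNReal.summable_coe,
    memℓp_gen_iff (p := 2) (by norm_num)]
  norm_num

lemma lp.ofReal_norm_sq_eq_tsum (f : lp E 2) :
    ENNReal.ofReal (‖f‖ ^ 2) = ∑' i, ‖f i‖ₑ ^ 2 := by
  have hsum : Summable fun i => ‖f i‖ ^ 2 := by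
    simpa using (memℓp_gen_iff (p := 2) (by norm_num)).1 (lp.memℓp f)
  have hnorm : ‖f‖ ^ 2 = ∑' i, ‖f i‖ ^ 2 := by
    simpa using lp.norm_rpow_eq_tsum (p := 2) (by norm_num) f
  rw [hnorm, ENNReal.ofReal_tsum_of_nonneg (fun _ => by positivity) hsum]
  simp_rw [ofReal_norm_sq_eq_enorm_sq]

end lp

namespace Paper

section IteratedDomain

variable {H : Type*} [NormedAddCommGroup H] [InnerProductSpace ℂ H] (T : H →ₗ.[ℂ] H)

def iterDomain (n : ℕ) : Submodule ℂ H where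
  carrier := {x | iterMem T n x}
  zero_mem' := by
    induction n with
    | zero => trivial
    | succ n ih =>
      refine ⟨T.domain.zero_mem, ?_⟩
      rw [show T ⟨0, _⟩ = 0 from T.map_zero]
      exact ih
  add_mem' := by
    induction n with
    | zero => intros; trivial
    | succ n ih =>
      rintro x y ⟨hx, hx'⟩ ⟨hy, hy'⟩
      refine ⟨T.domain.add_mem hx hy, ?_⟩
      simpa [← T.map_add] using ih hx' hy'
  smul_mem' := by
    induction n with
    | zero => intros; trivial
    | succ n ih =>
      rintro c x ⟨hx, hx'⟩
      refine ⟨T.domain.smul_mem c hx, ?_⟩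
      simpa [← T.map_smul] using ih (c := c) hx'

variable {T}

lemma iterMem_of_domain_eq_top (h : T.domain = ⊤) (n : ℕ) (x : H) : iterMem T n x := by
  induction n generalizing x with
  | zero => trivial
  | succ n ih => exact ⟨h ▸ Submodule.mem_top, ih _⟩

lemma norm_iterApp_le {C : ℝ} (hC0 : 0 ≤ C) (hC : ∀ x : T.domain, ‖T x‖ ≤ C * ‖(x : H)‖)
    {n : ℕ} {x : H} (h : iterMem T n x) : ‖iterApp T n x‖ ≤ C ^ n * ‖x‖ := by
  induction n generalizing x with
  | zero => simp [iterApp]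
  | succ n ih =>
    obtain ⟨hx, h⟩ := h
    rw [iterApp, dif_pos hx, pow_succ, mul_assoc]
    exact (ih h).trans (mul_le_mul_of_nonneg_left (hC _) (pow_nonneg hC0 n))

end IteratedDomain

section WeightedShift

variable {V : Type*} (t : DirectedTree V) (lam : V → ℂ)

lemma lamLin_apply (f : V → ℂ) (v : V) :
    lamLin t lam f v = if t.hasPar v then lam v * f (t.par v) else 0 := rfl

lemma coe_iterApp_shift {n : ℕ} {f : H2 V} (h : iterMem (shift t lam) n f) :
    ⇑(iterApp (shift t lam) n f) = (lamLin t lam)^[n] ⇑f := by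
  induction n generalizing f with
  | zero => rfl
  | succ n ih =>
    obtain ⟨hf, h⟩ := h
    rw [iterApp, dif_pos hf, ih h]
    rfl

lemma iterMem_shift_of_memℓp {f : H2 V} (h : ∀ k, Memℓp ((lamLin t lam)^[k] ⇑f) 2) (n : ℕ) :
    iterMem (shift t lam) n f := by
  induction n generalizing f with
  | zero => trivial
  | succ n ih => exact ⟨h 1, ih fun k => h (k + 1)⟩

lemma forall_iterMem_shift_iff {f : H2 V} :
    (∀ n, iterMem (shift t lam) n f) ↔ ∀ n, Memℓp ((lamLin t lam)^[n] ⇑f) 2 :=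
  ⟨fun h n => coe_iterApp_shift t lam (h n) ▸ lp.memℓp _, iterMem_shift_of_memℓp t lam⟩

lemma lamLin_iterate_evec (n : ℕ) (u : V) :
    (lamLin t lam)^[n] ⇑(evec u) = (t.chin n u).indicator (t.wprod lam n) := by
  induction n with
  | zero =>
    ext w
    by_cases hw : w = u
    · simp [evec, hw, DirectedTree.wprod, DirectedTree.chin, DirectedTree.chiIter]
    · simp [evec, hw, DirectedTree.chin, DirectedTree.chiIter]
  | succ n ih =>
    ext v
    rw [Function.iterate_succ_apply', ih, lamLin_apply]
    by_cases hv : t.hasPar v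
    · by_cases hpar : t.par v ∈ t.chin n u
      · rw [if_pos hv, Set.indicator_of_mem hpar,
          Set.indicator_of_mem ((t.mem_chin_succ_iff_par hv).2 hpar), t.wprod_succ]
      · rw [if_pos hv, Set.indicator_of_notMem hpar,
          Set.indicator_of_notMem (mt (t.mem_chin_succ_iff_par hv).1 hpar), mul_zero]
    · rw [if_neg hv, Set.indicator_of_notMem (mt t.hasPar_of_mem_chin_succ hv)]

lemma tsum_enorm_lamLin_iterate_evec_sq (n : ℕ) (u : V) :
    ∑' w, ‖(lamLin t lam)^[n] ⇑(evec u) w‖ₑ ^ 2 = t.weightSum lam n u := by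
  rw [lamLin_iterate_evec, DirectedTree.weightSum,
    tsum_subtype (t.chin n u) fun w => ENNReal.ofReal (‖t.wprod lam n w‖ ^ 2)]
  refine tsum_congr fun w => ?_
  by_cases hw : w ∈ t.chin n u <;> simp [hw]

lemma ofReal_norm_iterApp_shift_evec_sq {n : ℕ} {u : V}
    (h : iterMem (shift t lam) n (evec u)) :
    ENNReal.ofReal (‖iterApp (shift t lam) n (evec u)‖ ^ 2) = t.weightSum lam n u := by
  rw [lp.ofReal_norm_sq_eq_tsum, coe_iterApp_shift t lam h, tsum_enorm_lamLin_iterate_evec_sq]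

lemma spanDomInfty_iff_weightSum_ne_top :
    spanDomInfty t lam ↔ ∀ n u, t.weightSum lam n u ≠ ∞ := by
  simp_rw [← tsum_enorm_lamLin_iterate_evec_sq, ← memℓp_two_iff_tsum_enorm_sq_ne_top]
  constructor
  · intro h n u
    exact (forall_iterMem_shift_iff t lam).1 (h _ (Submodule.subset_span ⟨u, rfl⟩)) n
  · intro h f hf n
    refine (Submodule.span_le (p := iterDomain (shift t lam) n)).2 ?_ hf
    rintro _ ⟨u, rfl⟩
    exact (forall_iterMem_shift_iff t lam).2 (fun k => h k u) n

lemma tsum_enorm_lamLin_sq (f : V → ℂ) :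
    ∑' v, ‖lamLin t lam f v‖ₑ ^ 2 = ∑' u, (∑' v : t.chi u, ‖lam v‖ₑ ^ 2) * ‖f u‖ₑ ^ 2 := by
  have hsupp : Function.support (fun v => ‖lamLin t lam f v‖ₑ ^ 2) ⊆ ⋃ u, t.chi u := by
    intro v hv
    rw [t.iUnion_chi]
    by_contra h
    exact hv (by simp [lamLin_apply, show ¬ t.hasPar v from h])
  rw [← tsum_subtype_eq_of_support_subset hsupp,
    ENNReal.tsum_biUnion (f := fun v => ‖lamLin t lam f v‖ₑ ^ 2) t.pairwiseDisjoint_chi]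
  refine tsum_congr fun u => ?_
  rw [← ENNReal.tsum_mul_right]
  refine tsum_congr fun v => ?_
  rw [lamLin_apply, if_pos ⟨u, v.2⟩, t.par_eq_of_E v.2, enorm_mul, mul_pow]

lemma tsum_enorm_lamLin_sq_le {M : ℝ≥0∞} (h : ∀ u, ∑' v : t.chi u, ‖lam v‖ₑ ^ 2 ≤ M)
    (f : V → ℂ) : ∑' v, ‖lamLin t lam f v‖ₑ ^ 2 ≤ M * ∑' u, ‖f u‖ₑ ^ 2 := by
  rw [tsum_enorm_lamLin_sq, ← ENNReal.tsum_mul_left]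
  exact ENNReal.tsum_le_tsum fun u => mul_le_mul_left (h u) _

lemma shift_bounded_of_tsum_le {M : ℝ} (hM : 0 ≤ M)
    (h : ∀ u, ∑' v : t.chi u, ENNReal.ofReal (‖lam v‖ ^ 2) ≤ ENNReal.ofReal M) :
    (shift t lam).domain = ⊤ ∧
      ∀ f : (shift t lam).domain, ‖shift t lam f‖ ≤ √M * ‖(f : H2 V)‖ := by
  simp_rw [ofReal_norm_sq_eq_enorm_sq] at h
  have hle (f : H2 V) : ∑' v, ‖lamLin t lam f v‖ₑ ^ 2 ≤ ENNReal.ofReal (M * ‖f‖ ^ 2) := by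
    rw [ENNReal.ofReal_mul hM, lp.ofReal_norm_sq_eq_tsum]
    exact tsum_enorm_lamLin_sq_le t lam h f
  refine ⟨eq_top_iff.2 fun f _ => memℓp_two_iff_tsum_enorm_sq_ne_top.2
    (ne_top_of_le_ne_top ENNReal.ofReal_ne_top (hle f)), fun f => ?_⟩
  have hsq : ‖shift t lam f‖ ^ 2 ≤ M * ‖(f : H2 V)‖ ^ 2 := by
    rw [← ENNReal.ofReal_le_ofReal_iff (by positivity), lp.ofReal_norm_sq_eq_tsum]
    exact hle f
  refine (sq_le_sq₀ (norm_nonneg _) (by positivity)).1 ?_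
  rwa [mul_pow, Real.sq_sqrt hM]

lemma weightSum_le_of_shift_bounded (hdom : (shift t lam).domain = ⊤) {C : ℝ}
    (hC : ∀ f : (shift t lam).domain, ‖shift t lam f‖ ≤ C * ‖(f : H2 V)‖) (n : ℕ) (u : V) :
    t.weightSum lam n u ≤ ENNReal.ofReal (C ^ 2) ^ n := by
  have hnorm : ‖evec u‖ = 1 := by simp [evec, lp.norm_single]
  have hC0 : 0 ≤ C := by
    have := hC ⟨evec u, hdom ▸ Submodule.mem_top⟩
    rw [Submodule.coe_mk, hnorm, mul_one] at this
    exact (norm_nonneg _).trans this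
  have hiter := iterMem_of_domain_eq_top hdom n (evec u)
  rw [← ofReal_norm_iterApp_shift_evec_sq t lam hiter, ← ENNReal.ofReal_pow (sq_nonneg C),
    ← pow_mul, mul_comm, pow_mul]
  refine ENNReal.ofReal_le_ofReal (pow_le_pow_left₀ (norm_nonneg _) ?_ 2)
  simpa [hnorm] using norm_iterApp_le hC0 hC hiter

end WeightedShift

end Paper

theorem stmt15_general {V : Type*} (t : Paper.DirectedTree V) (lam : V → ℂ)
    (μ : V → Measure ℝ) (ε : V → ℝ)
    (hprob : ∀ u : V, IsProbabilityMeasure (μ u)) (hpos : ∀ u : V, μ u (Set.Iio 0) = 0)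
    (hcons : ∀ u : V, Consistent t lam μ ε u) :
    (∀ (u : V) (n : ℕ), 1 ≤ n →
      (∫⁻ s, ENNReal.ofReal s ^ n ∂(μ u))
        = ∑' v : t.chin n u, ENNReal.ofReal (‖t.wprod lam n (v : V)‖ ^ 2)) ∧
    (∀ (u : V) (n : ℕ), 1 ≤ n → t.chin n u = ∅ →
      ∀ v ∈ t.des u, μ v = Measure.dirac (0 : ℝ)) ∧
    (spanDomInfty t lam ↔
      ∀ (n : ℕ) (u : V), (∫⁻ s, ENNReal.ofReal s ^ n ∂(μ u)) < ⊤) ∧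
    (spanDomInfty t lam → ∀ (u : V) (n : ℕ),
      ENNReal.ofReal (‖iterApp (shift t lam) n (evec u)‖ ^ 2)
        = ∫⁻ s, ENNReal.ofReal s ^ n ∂(μ u)) ∧
    (((shift t lam).domain = ⊤ ∧
        ∃ C : ℝ, ∀ f : (shift t lam).domain, ‖shift t lam f‖ ≤ C * ‖(f : H2 V)‖) ↔
      ∃ M : ℝ, 0 ≤ M ∧ ∀ u : V, μ u ((Set.Icc 0 M)ᶜ) = 0) := by
  have hmom := lintegral_pow_eq_weightSum hprob hpos hcons
  refine ⟨fun u n _ => hmom n u, ?_, ?_, ?_, ?_⟩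
  · intro u n hn hempty v hv
    have := hprob v
    refine eq_dirac_zero_of_lintegral_pow_eq_zero (hpos v) (n := n) (by omega) ?_
    simp [hmom, DirectedTree.weightSum, t.chin_eq_empty_of_mem_des hempty hv]
  · simp_rw [spanDomInfty_iff_weightSum_ne_top, hmom, lt_top_iff_ne_top]
  · intro h u n
    rw [hmom, ofReal_norm_iterApp_shift_evec_sq]
    exact h _ (Submodule.subset_span ⟨u, rfl⟩) n
  constructor
  · rintro ⟨hdom, C, hC⟩
    exact ⟨C ^ 2, sq_nonneg C, fun u => measure_compl_Icc_eq_zero_of_lintegral_pow_le (hpos u)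
      (sq_nonneg C) fun n => hmom n u ▸ weightSum_le_of_shift_bounded t lam hdom hC n u⟩
  · rintro ⟨M, hM, hsupp⟩
    obtain ⟨hdom, hbdd⟩ := shift_bounded_of_tsum_le t lam hM fun u => by
      have := lintegral_pow_le_of_measure_compl_Icc_eq_zero (hsupp u) 1
      rw [hmom, DirectedTree.weightSum_succ, (hprob u).measure_univ, pow_one, mul_one] at this
      simpa only [DirectedTree.weightSum_zero, mul_one] using this
    exact ⟨hdom, √M, hbdd⟩

/-- moments of a consistent system of measures and the weighted shift. -/
theorem stmt15 {V : Type*} (t : Paper.DirectedTree V) (lam : V → ℂ)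
    (μ : V → Measure ℝ) (ε : V → ℝ)
    (hprob : ∀ u : V, IsProbabilityMeasure (μ u)) (hpos : ∀ u : V, μ u (Set.Iio 0) = 0)
    (hε : ∀ u : V, 0 ≤ ε u) (hcons : ∀ u : V, Consistent t lam μ ε u) :
    (∀ (u : V) (n : ℕ), 1 ≤ n →
      (∫⁻ s, ENNReal.ofReal s ^ n ∂(μ u))
        = ∑' v : t.chin n u, ENNReal.ofReal (‖t.wprod lam n (v : V)‖ ^ 2)) ∧
    (∀ (u : V) (n : ℕ), 1 ≤ n → t.chin n u = ∅ →
      ∀ v ∈ t.des u, μ v = Measure.dirac (0 : ℝ)) ∧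
    (spanDomInfty t lam ↔
      ∀ (n : ℕ) (u : V), (∫⁻ s, ENNReal.ofReal s ^ n ∂(μ u)) < ⊤) ∧
    (spanDomInfty t lam → ∀ (u : V) (n : ℕ),
      ENNReal.ofReal (‖iterApp (shift t lam) n (evec u)‖ ^ 2)
        = ∫⁻ s, ENNReal.ofReal s ^ n ∂(μ u)) ∧
    (((shift t lam).domain = ⊤ ∧
        ∃ C : ℝ, ∀ f : (shift t lam).domain, ‖shift t lam f‖ ≤ C * ‖(f : H2 V)‖) ↔
      ∃ M : ℝ, 0 ≤ M ∧ ∀ u : V, μ u ((Set.Icc 0 M)ᶜ) = 0) :=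
  stmt15_general t lam μ ε hprob hpos hcons
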